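/- Let X be a locally compact Hausdorff space and let φ : ℂ × ℂ → [0,∞) be a continuous map satisfying (inc). Let f, g ∈ C₀(X) and let r, s > 0 be real numbers such that φ(f(x), g(x)) < φ(r,s) for every x ∈ X. Then sup_{x ∈ X} φ(f(x), g(x)) < φ(r,s), i.e., ‖φ(f,g)‖_X < φ(r,s). -/

import Mathlib

open scoped ZeroAtInfty Pointwise
open Filter Topology

set_option maxHeartbeats 1000000
set_option synthInstance.maxHeartbeats 1000000

/-- The (inc) property for a two-variable function `φ : ℂ → ℂ → ℝ`. -/
def IncProp (φ : ℂ → ℂ → ℝ) : Prop :=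
  (∀ s₁ s₂ t : ℂ, ‖s₁‖ ≤ ‖s₂‖ →
      φ s₁ t ≤ φ s₂ t ∧ φ t s₁ ≤ φ t s₂) ∧
  (∀ s₁ s₂ t : ℂ, ‖s₁‖ < ‖s₂‖ → t ≠ 0 →
      φ s₁ t < φ s₂ t ∧ φ t s₁ < φ t s₂)

/-- The (con) property. -/
def ConProp (φ : ℂ → ℂ → ℝ) : Prop :=
  ∀ (n : ℕ), 0 < n → ∀ (s : Fin n → ℂ) (t : ℂ),
    φ ((1 / (n : ℂ)) * ∑ i, s i) t ≤ (1 / (n : ℝ)) * ∑ i, φ (s i) t ∧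
    φ t ((1 / (n : ℂ)) * ∑ i, s i) ≤ (1 / (n : ℝ)) * ∑ i, φ t (s i)

/-- sup of φ(f,g) over the space (the supremum norm of the nonnegative function φ(f,g)). -/
noncomputable def supPhi {X : Type*} (φ : ℂ → ℂ → ℝ) (f g : X → ℂ) : ℝ :=
  ⨆ x, φ (f x) (g x)

noncomputable def rhoPlus {X : Type*} (φ : ℂ → ℂ → ℝ) (f g : X → ℂ) : ℝ :=
  supPhi φ f g + supPhi φ g f

noncomputable def rhoMax {X : Type*} (φ : ℂ → ℂ → ℝ) (f g : X → ℂ) : ℝ :=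
  max (supPhi φ f g) (supPhi φ g f)

noncomputable def rhoPlusScalar (φ : ℂ → ℂ → ℝ) (r s : ℂ) : ℝ := φ r s + φ s r

noncomputable def rhoMaxScalar (φ : ℂ → ℂ → ℝ) (r s : ℂ) : ℝ := max (φ r s) (φ s r)

/-- Generic ρ, with a Boolean selecting between ρ₊ (true) and ρ_max (false). -/
noncomputable def rhoGen {X : Type*} (c : Bool) (φ : ℂ → ℂ → ℝ) (f g : X → ℂ) : ℝ :=
  if c then rhoPlus φ f g else rhoMax φ f g

noncomputable def rhoGenScalar (c : Bool) (φ : ℂ → ℂ → ℝ) (r s : ℂ) : ℝ :=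
  if c then rhoPlusScalar φ r s else rhoMaxScalar φ r s

/-- `x₀` is a strong boundary point of `A ⊆ C₀(X)`. -/
def IsStrongBoundaryPoint {X : Type*} [TopologicalSpace X]
    (A : Set C₀(X, ℂ)) (x₀ : X) : Prop :=
  ∀ ε > (0 : ℝ), ∀ V ∈ 𝓝 x₀, ∃ f ∈ A, f x₀ = 1 ∧ ‖f‖ = 1 ∧
    ∀ x ∉ V, ‖f x‖ < ε

/-- V_{x₀}(A). -/
def Vset {X : Type*} [TopologicalSpace X] (A : Set C₀(X, ℂ)) (x₀ : X) : Set C₀(X, ℂ) :=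
  {f ∈ A | f x₀ = 1 ∧ ‖f‖ = 1}

/-- F_{x₀}(A). -/
def Fset {X : Type*} [TopologicalSpace X] (A : Set C₀(X, ℂ)) (x₀ : X) : Set C₀(X, ℂ) :=
  {f ∈ A | ‖f x₀‖ = 1 ∧ ‖f‖ = 1}

/-- The maximum modulus set M(f). -/
def maxSet {X : Type*} [TopologicalSpace X] (f : C₀(X, ℂ)) : Set X :=
  {x | ‖f x‖ = ‖f‖}

noncomputable instance instSeminormedAddCommGroupStrongDualZeroAtInfty {X : Type*} [TopologicalSpace X]
    (𝒜 : Submodule ℂ C₀(X, ℂ)) : SeminormedAddCommGroup (StrongDual ℂ 𝒜) :=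
  @ContinuousLinearMap.toSeminormedAddCommGroup ℂ ℂ 𝒜 ℂ _ _ _ _ _ _ (RingHom.id ℂ) _

/-- Evaluation at a point, as a continuous linear functional on a subspace of C₀(X). -/
noncomputable def evalDual {X : Type*} [TopologicalSpace X]
    (𝒜 : Submodule ℂ C₀(X, ℂ)) (x : X) : StrongDual ℂ 𝒜 :=
  LinearMap.mkContinuous (𝕜 := ℂ) (E := 𝒜)
    { toFun := fun f => (f : C₀(X, ℂ)) x
      map_add' := fun f g => rfl
      map_smul' := fun c f => rfl }
    1
    (fun f => by
      rw [one_mul, ← Submodule.norm_coe]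
      exact ((f : C₀(X, ℂ)).toBCF.norm_coe_le_norm x).trans_eq
        ZeroAtInftyContinuousMap.norm_toBCF_eq_norm)

/-- `x` lies in the Choquet boundary of a subspace `𝒜` of `C₀(X)`: the evaluation functional is
an extreme point of the closed unit ball of the dual space. -/
def InChoquetBoundary {X : Type*} [TopologicalSpace X]
    (𝒜 : Submodule ℂ C₀(X, ℂ)) (x : X) : Prop :=
  evalDual 𝒜 x ∈
    Set.extremePoints ℝ (Metric.closedBall (0 : StrongDual ℂ 𝒜) 1)

/-- A function algebra on `X`: a closed subalgebra of `C₀(X)` strongly separating points. -/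
def IsFunctionAlgebra {X : Type*} [TopologicalSpace X]
    (𝒜 : NonUnitalSubalgebra ℂ C₀(X, ℂ)) : Prop :=
  IsClosed (𝒜 : Set C₀(X, ℂ)) ∧
  (∀ x y : X, x ≠ y → ∃ f ∈ 𝒜, f x ≠ f y) ∧
  (∀ x : X, ∃ g ∈ 𝒜, g x ≠ (0 : ℂ))

/-- `|A| ⊆ |𝒜|`. -/
def ModulusSubset {X : Type*} [TopologicalSpace X]
    (A 𝒜 : Set C₀(X, ℂ)) : Prop :=
  ∀ f ∈ A, ∃ g ∈ 𝒜, ∀ x, ‖f x‖ = ‖g x‖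

/-- The positive elements of a subset `S` of `C₀(X)`. -/
def posPart {X : Type*} [TopologicalSpace X] (S : Set C₀(X, ℂ)) : Set C₀(X, ℂ) :=
  {f ∈ S | ∀ x, ∃ r : ℝ, 0 ≤ r ∧ f x = r}

/- Off a compact set both `f` and `g` are small, so there `φ(f,g) ≤ φ(r/2, s/2) < φ(r,s)`, by (inc);
on the compact set the continuous function `φ(f,g)` attains its maximum, which is `< φ(r,s)` by
hypothesis. -/

theorem Continuous.exists_lt_forall_le_of_eventually_le {X α : Type*} [TopologicalSpace X]
    [LinearOrder α] [TopologicalSpace α] [OrderClosedTopology α] {F : X → α} {c M : α}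
    (hF : Continuous F) (hlt : ∀ x, F x < M) (hc : c < M)
    (hev : ∀ᶠ x in cocompact X, F x ≤ c) : ∃ m < M, ∀ x, F x ≤ m := by
  rcases isEmpty_or_nonempty X with _ | ⟨⟨x₀⟩⟩
  · exact ⟨c, hc, isEmptyElim⟩
  -- `max F c` is constant off a compact set, so it attains its maximum.
  obtain ⟨x, hx⟩ := (hF.max continuous_const).exists_forall_ge' x₀ <|
    hev.mono fun y hy => (max_eq_right hy).le.trans (le_max_right _ _)
  exact ⟨max (F x) c, max_lt (hlt x) hc, fun y => (le_max_left _ _).trans (hx y)⟩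

theorem ZeroAtInftyContinuousMap.eventually_norm_lt {X : Type*} [TopologicalSpace X]
    (f : C₀(X, ℂ)) {ε : ℝ} (hε : 0 < ε) : ∀ᶠ x in cocompact X, ‖f x‖ < ε :=
  (tendsto_zero_iff_norm_tendsto_zero.mp f.zero_at_infty').eventually_lt_const hε

namespace IncProp

variable {φ : ℂ → ℂ → ℝ} {a a' b b' : ℂ}

theorem monotone (hinc : IncProp φ) (ha : ‖a‖ ≤ ‖a'‖) (hb : ‖b‖ ≤ ‖b'‖) :
    φ a b ≤ φ a' b' :=
  (hinc.1 a a' b ha).1.trans (hinc.1 b b' a' hb).2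

theorem lt_of_norm_lt (hinc : IncProp φ) (ha : ‖a‖ < ‖a'‖) (hb : ‖b‖ ≤ ‖b'‖) (hb0 : b ≠ 0) :
    φ a b < φ a' b' :=
  (hinc.2 a a' b ha hb0).1.trans_le (hinc.1 b b' a' hb).2

theorem half_lt (hinc : IncProp φ) {r s : ℝ} (hr : 0 < r) (hs : 0 < s) :
    φ ((r / 2 : ℝ) : ℂ) ((s / 2 : ℝ) : ℂ) < φ r s := by
  refine hinc.lt_of_norm_lt ?_ ?_ (by exact_mod_cast (half_pos hs).ne')
  · rw [Complex.norm_of_nonneg (half_pos hr).le, Complex.norm_of_nonneg hr.le]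
    exact half_lt_self hr
  · rw [Complex.norm_of_nonneg (half_pos hs).le, Complex.norm_of_nonneg hs.le]
    exact (half_lt_self hs).le

end IncProp

theorem stmt2_general {X : Type*} [TopologicalSpace X]
    (φ : ℂ → ℂ → ℝ) (hφc : Continuous fun p : ℂ × ℂ => φ p.1 p.2)
    (hφ0 : ∀ s t : ℂ, 0 ≤ φ s t) (hinc : IncProp φ)
    (f g : C₀(X, ℂ)) (r s : ℝ) (hr : 0 < r) (hs : 0 < s)
    (h : ∀ x : X, φ (f x) (g x) < φ (r : ℂ) (s : ℂ)) :
    supPhi φ (fun x => f x) (fun x => g x) < φ (r : ℂ) (s : ℂ) := by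
  have hsmall : ∀ᶠ x in cocompact X,
      φ (f x) (g x) ≤ φ ((r / 2 : ℝ) : ℂ) ((s / 2 : ℝ) : ℂ) := by
    filter_upwards [f.eventually_norm_lt (half_pos hr), g.eventually_norm_lt (half_pos hs)]
      with x hfx hgx
    refine hinc.monotone ?_ ?_
    · rw [Complex.norm_of_nonneg (half_pos hr).le]; exact hfx.le
    · rw [Complex.norm_of_nonneg (half_pos hs).le]; exact hgx.le
  obtain ⟨m, hm, hle⟩ := (hφc.comp (f.continuous.prodMk g.continuous))
    |>.exists_lt_forall_le_of_eventually_le h (hinc.half_lt hr hs) hsmall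
  -- `max m 0` rather than `m`: for empty `X` the supremum is the junk value `0`.
  calc supPhi φ (fun x => f x) (fun x => g x) ≤ max m 0 :=
        Real.iSup_le (fun x => (hle x).trans (le_max_left _ _)) (le_max_right _ _)
    _ < φ r s := max_lt hm ((hφ0 _ _).trans_lt (hinc.half_lt hr hs))

theorem stmt2 {X : Type*} [TopologicalSpace X] [LocallyCompactSpace X] [T2Space X]
    (φ : ℂ → ℂ → ℝ) (hφc : Continuous fun p : ℂ × ℂ => φ p.1 p.2)
    (hφ0 : ∀ s t : ℂ, 0 ≤ φ s t) (hinc : IncProp φ)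
    (f g : C₀(X, ℂ)) (r s : ℝ) (hr : 0 < r) (hs : 0 < s)
    (h : ∀ x : X, φ (f x) (g x) < φ (r : ℂ) (s : ℂ)) :
    supPhi φ (fun x => f x) (fun x => g x) < φ (r : ℂ) (s : ℂ) :=
  stmt2_general φ hφc hφ0 hinc f g r s hr hs h
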